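/- The category ParaDynam of linearly parametrized dynamical systems has all finite colimits. -/

import Mathlib

open CategoryTheory

open scoped Classical

/-- The pushforward of a function `ψ : S → ℝ` along `f : S → S'`. -/
noncomputable def pushforward {S S' : Type} [Fintype S] (f : S → S') (ψ : S → ℝ) : S' → ℝ :=
  fun s' => ∑ s : S, if f s = s' then ψ s else 0

/-- The pullback of a function `ψ : S' → ℝ` along `f : S → S'`. -/
def pullback {S S' : Type} (f : S → S') (ψ : S' → ℝ) : S → ℝ := ψ ∘ f

theorem pushforward_id {S : Type} [Fintype S] :
    pushforward (id : S → S) = fun ψ => ψ := by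
  funext ψ s
  simp [pushforward]

theorem pushforward_comp {S T U : Type} [Fintype S] [Fintype T]
    (f : S → T) (g : T → U) (ψ : S → ℝ) :
    pushforward g (pushforward f ψ) = pushforward (g ∘ f) ψ := by
  funext u
  simp only [pushforward, Function.comp_apply]
  have h1 : ∀ t : T, (if g t = u then ∑ s : S, (if f s = t then ψ s else 0) else 0)
      = ∑ s : S, (if f s = t ∧ g t = u then ψ s else 0) := by
    intro t
    by_cases h : g t = u
    · simp only [h, if_true, and_true]
    · simp [h]
  rw [Finset.sum_congr rfl fun t _ => h1 t, Finset.sum_comm]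
  refine Finset.sum_congr rfl fun s _ => ?_
  rw [Finset.sum_eq_single (f s)]
  · simp
  · intro t _ ht
    simp [Ne.symm ht]
  · simp

/-- The real vector space `D(S)` of smooth vector fields on `ℝ^S`, as a submodule of
the space of all maps `ℝ^S → ℝ^S`. -/
def smoothVF (S : Type) [Fintype S] : Submodule ℝ ((S → ℝ) → (S → ℝ)) where
  carrier := {v | ContDiff ℝ (⊤ : ℕ∞) v}
  add_mem' := by
    intro v w hv hw
    simp only [Set.mem_setOf_eq] at *
    exact hv.add hw
  zero_mem' := by
    simp only [Set.mem_setOf_eq]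
    exact contDiff_const
  smul_mem' := by
    intro c v hv
    simp only [Set.mem_setOf_eq] at *
    exact hv.const_smul c

/-- A linearly parametrized dynamical system: finite types `S` of variables and `P`
of parameters, together with an `ℝ`-linear map from `ℝ^P` to the space of smooth
vector fields on `ℝ^S`. -/
structure ParaDynSys where
  S : Type
  P : Type
  [finS : Fintype S]
  [finP : Fintype P]
  v : (P → ℝ) →ₗ[ℝ] smoothVF S

attribute [instance] ParaDynSys.finS ParaDynSys.finP

/-- A morphism of linearly parametrized dynamical systems. -/
@[ext]
structure ParaDynHom (A B : ParaDynSys) where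
  f : A.S → B.S
  q : A.P → B.P
  compat : ∀ ψ : A.P → ℝ,
    (B.v (pushforward q ψ) : (B.S → ℝ) → (B.S → ℝ)) =
      pushforward f ∘ (A.v ψ : (A.S → ℝ) → (A.S → ℝ)) ∘ pullback f

/-- The category `ParaDynam` of linearly parametrized dynamical systems. -/
instance : Category ParaDynSys where
  Hom := ParaDynHom
  id A := ⟨id, id, fun ψ => by
    rw [pushforward_id (S := A.P), pushforward_id (S := A.S)]
    rfl⟩
  comp {A B C} φ φ' := ⟨φ'.f ∘ φ.f, φ'.q ∘ φ.q, fun ψ => by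
    rw [← pushforward_comp, φ'.compat, φ.compat]
    funext x
    show pushforward φ'.f (pushforward φ.f _) = _
    rw [pushforward_comp]
    rfl⟩
  id_comp φ := ParaDynHom.ext rfl rfl
  comp_id φ := ParaDynHom.ext rfl rfl
  assoc φ φ' φ'' := ParaDynHom.ext rfl rfl

/-! ### Auxiliary development -/

open Function Limits

section LinearMaps

variable {S S' S'' : Type} [Fintype S] [Fintype S'] [Fintype S'']

/-- `pushforward` as a linear map. -/
noncomputable def pushLM (f : S → S') : (S → ℝ) →ₗ[ℝ] (S' → ℝ) where
  toFun := pushforward f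
  map_add' ψ φ := by
    funext s'
    simp only [pushforward, Pi.add_apply]
    rw [← Finset.sum_add_distrib]
    exact Finset.sum_congr rfl fun s _ => by split_ifs <;> simp
  map_smul' c ψ := by
    funext s'
    simp only [pushforward, Pi.smul_apply, RingHom.id_apply, smul_eq_mul]
    rw [Finset.mul_sum]
    exact Finset.sum_congr rfl fun s _ => by split_ifs <;> simp

@[simp] lemma pushLM_apply (f : S → S') (ψ : S → ℝ) : pushLM f ψ = pushforward f ψ := rfl

/-- `pullback` as a linear map. -/
def pullLM (f : S → S') : (S' → ℝ) →ₗ[ℝ] (S → ℝ) where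
  toFun := pullback f
  map_add' _ _ := rfl
  map_smul' _ _ := rfl

@[simp] lemma pullLM_apply (f : S → S') (ψ : S' → ℝ) : pullLM f ψ = pullback f ψ := rfl

lemma smoothVF_contDiff {S : Type} [Fintype S] (v : smoothVF S) :
    ContDiff ℝ (⊤ : ℕ∞) (v : (S → ℝ) → (S → ℝ)) := v.2

lemma contDiff_pushforward (f : S → S') :
    ContDiff ℝ (⊤ : ℕ∞) (pushforward f : (S → ℝ) → (S' → ℝ)) :=
  (pushLM f).toContinuousLinearMap.contDiff

lemma contDiff_pullback (f : S → S') :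
    ContDiff ℝ (⊤ : ℕ∞) (pullback f : (S' → ℝ) → (S → ℝ)) :=
  (pullLM f).toContinuousLinearMap.contDiff

/-- Conjugation of a smooth vector field by a map of finite types. -/
noncomputable def conjVF (f : S → S') : smoothVF S →ₗ[ℝ] smoothVF S' where
  toFun v := ⟨pushforward f ∘ (v : (S → ℝ) → (S → ℝ)) ∘ pullback f,
    (contDiff_pushforward f).comp ((smoothVF_contDiff v).comp (contDiff_pullback f))⟩
  map_add' v w := by
    apply Subtype.ext
    funext x
    show pushforward f (((v : (S → ℝ) → (S → ℝ)) + w) (pullback f x)) = _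
    simp only [Pi.add_apply]
    exact (pushLM f).map_add _ _
  map_smul' c v := by
    apply Subtype.ext
    funext x
    show pushforward f ((c • (v : (S → ℝ) → (S → ℝ))) (pullback f x)) = _
    simp only [Pi.smul_apply]
    exact (pushLM f).map_smul c _

@[simp] lemma conjVF_coe (f : S → S') (v : smoothVF S) :
    (conjVF f v : (S' → ℝ) → (S' → ℝ)) =
      pushforward f ∘ (v : (S → ℝ) → (S → ℝ)) ∘ pullback f := rfl

lemma conjVF_conjVF (f : S → S') (g : S' → S'') (v : smoothVF S) :
    conjVF g (conjVF f v) = conjVF (g ∘ f) v := by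
  apply Subtype.ext
  funext x
  exact pushforward_comp f g _

end LinearMaps

/-- The compatibility condition of a morphism, phrased in `smoothVF`. -/
lemma ParaDynHom.compat' {A B : ParaDynSys} (φ : ParaDynHom A B) (ψ : A.P → ℝ) :
    B.v (pushforward φ.q ψ) = conjVF φ.f (A.v ψ) :=
  Subtype.ext (φ.compat ψ)

section Push

variable {S S' : Type} [Fintype S] [Fintype S']

lemma pushforward_single (f : S → S') (a : S) (c : ℝ) :
    pushforward f (Pi.single a c) = Pi.single (f a) c := by
  funext s'
  simp only [pushforward]
  rw [Finset.sum_eq_single a]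
  · simp [Pi.single_apply, eq_comm]
  · intro b _ hb
    simp [Pi.single_apply, hb]
  · simp

/-- A linear map which sends `Pi.single p 1` to something depending only on `q p` is
determined by the pushforward along `q`. -/
lemma pushforward_determines {P S' : Type} [Fintype P] [Fintype S']
    {M : Type} [AddCommGroup M] [Module ℝ M] (q : P → S') (L : (P → ℝ) →ₗ[ℝ] M)
    (h : ∀ p p', q p = q p' → L (Pi.single p 1) = L (Pi.single p' 1))
    {χ χ' : P → ℝ} (e : pushforward q χ = pushforward q χ') : L χ = L χ' := by
  classical
  set W : S' → M := fun s' => if hs : ∃ p, q p = s' then L (Pi.single hs.choose 1) else 0 with hW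
  have key : ∀ χ₀ : P → ℝ, L χ₀ = ∑ s' : S', pushforward q χ₀ s' • W s' := by
    intro χ₀
    have hχ : χ₀ = ∑ p : P, χ₀ p • (Pi.single p 1 : P → ℝ) := by
      have hs : ∀ p : P, χ₀ p • (Pi.single p 1 : P → ℝ) = Pi.single p (χ₀ p) := fun p => by
        rw [← Pi.single_smul, smul_eq_mul, mul_one]
      simp_rw [hs]
      exact (Finset.univ_sum_single χ₀).symm
    have hL : L χ₀ = ∑ p : P, χ₀ p • L (Pi.single p 1) := by
      conv_lhs => rw [hχ]
      rw [map_sum]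
      exact Finset.sum_congr rfl fun p _ => by rw [map_smul]
    have hWq : ∀ p : P, W (q p) = L (Pi.single p 1) := by
      intro p
      have hs : ∃ p', q p' = q p := ⟨p, rfl⟩
      rw [hW]
      simp only [hs, dif_pos]
      exact h _ _ hs.choose_spec
    rw [hL]
    simp only [pushforward, Finset.sum_smul]
    rw [Finset.sum_comm]
    refine Finset.sum_congr rfl fun p _ => ?_
    rw [Finset.sum_eq_single (q p)]
    · simp [hWq p]
    · intro s' _ hs'
      simp [Ne.symm hs', hs']
    · simp
  rw [key χ, key χ', e]

/-- A linear section of the pushforward along a surjection. -/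
noncomputable def sectLM {q : S → S'} (hq : Surjective q) : (S' → ℝ) →ₗ[ℝ] (S → ℝ) where
  toFun ψ := fun s => if surjInv hq (q s) = s then ψ (q s) else 0
  map_add' ψ φ := by funext s; by_cases h : surjInv hq (q s) = s <;> simp [h]
  map_smul' c ψ := by funext s; by_cases h : surjInv hq (q s) = s <;> simp [h]

lemma pushforward_sectLM {q : S → S'} (hq : Surjective q) (ψ : S' → ℝ) :
    pushforward q (sectLM hq ψ) = ψ := by
  funext s'
  simp only [pushforward, sectLM, LinearMap.coe_mk, AddHom.coe_mk]
  rw [Finset.sum_eq_single (surjInv hq s')]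
  · simp [surjInv_eq hq]
  · intro s _ hs
    split_ifs with h1 h2
    · exact absurd (h1 ▸ h2).symm hs
    · rfl
    · rfl
  · simp

lemma pullback_pushforward_inl {T : Type} [Fintype T] (ψ : S → ℝ) :
    pullback (Sum.inl : S → S ⊕ T) (pushforward Sum.inl ψ) = ψ := by
  funext p
  show pushforward (Sum.inl : S → S ⊕ T) ψ (Sum.inl p) = ψ p
  simp only [pushforward]
  rw [Finset.sum_eq_single p] <;> simp_all

lemma pullback_pushforward_inr {T : Type} [Fintype T] (ψ : S → ℝ) :
    pullback (Sum.inr : T → S ⊕ T) (pushforward (Sum.inl : S → S ⊕ T) ψ) = 0 := by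
  funext p
  show pushforward (Sum.inl : S → S ⊕ T) ψ (Sum.inr p) = 0
  simp [pushforward]

lemma pullback_pushforward_inl' {T : Type} [Fintype T] (ψ : T → ℝ) :
    pullback (Sum.inl : S → S ⊕ T) (pushforward (Sum.inr : T → S ⊕ T) ψ) = 0 := by
  funext p
  show pushforward (Sum.inr : T → S ⊕ T) ψ (Sum.inl p) = 0
  simp [pushforward]

lemma pullback_pushforward_inr' {T : Type} [Fintype T] (ψ : T → ℝ) :
    pullback (Sum.inr : T → S ⊕ T) (pushforward (Sum.inr : T → S ⊕ T) ψ) = ψ := by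
  funext p
  show pushforward (Sum.inr : T → S ⊕ T) ψ (Sum.inr p) = ψ p
  simp only [pushforward]
  rw [Finset.sum_eq_single p] <;> simp_all

lemma pushforward_elim {T U : Type} [Fintype T] (u : S → U) (w : T → U) (ψ : S ⊕ T → ℝ) :
    pushforward (Sum.elim u w) ψ =
      pushforward u (ψ ∘ Sum.inl) + pushforward w (ψ ∘ Sum.inr) := by
  funext s'
  simp only [pushforward, Pi.add_apply, Function.comp_apply]
  rw [Fintype.sum_sum_type]
  simp
  rfl

end Push

/-! ### Initial object -/

/-- The initial parametrized dynamical system. -/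
noncomputable def initObj : ParaDynSys where
  S := Empty
  P := Empty
  v := 0

/-- The unique morphism out of the initial object. -/
noncomputable def initHom (A : ParaDynSys) : ParaDynHom initObj A where
  f := Empty.elim
  q := Empty.elim
  compat ψ := by
    have h0 : pushforward (Empty.elim : initObj.P → A.P) ψ = 0 := by
      funext p; simp [pushforward]
    erw [h0, map_zero]
    funext x
    simp only [ZeroMemClass.coe_zero, Pi.zero_apply]
    have : ((initObj.v ψ : smoothVF initObj.S) : (initObj.S → ℝ) → (initObj.S → ℝ))
        (_root_.pullback Empty.elim x) = 0 := rfl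
    show 0 = pushforward Empty.elim ((initObj.v ψ : (initObj.S → ℝ) → (initObj.S → ℝ))
      (_root_.pullback Empty.elim x))
    rw [this]
    exact ((pushLM (Empty.elim : initObj.S → A.S)).map_zero).symm

noncomputable instance (A : ParaDynSys) : Unique (initObj ⟶ A) where
  default := initHom A
  uniq φ := ParaDynHom.ext (funext fun e => e.elim) (funext fun e => e.elim)

/-! ### Binary coproducts -/

section Coproduct

variable (B C : ParaDynSys)

/-- The binary coproduct of parametrized dynamical systems. -/
noncomputable def coprodObj : ParaDynSys where
  S := B.S ⊕ C.S
  P := B.P ⊕ C.P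
  v := (conjVF Sum.inl) ∘ₗ B.v ∘ₗ pullLM Sum.inl + (conjVF Sum.inr) ∘ₗ C.v ∘ₗ pullLM Sum.inr

lemma coprodObj_v (ψ : B.P ⊕ C.P → ℝ) :
    (coprodObj B C).v ψ =
      conjVF Sum.inl (B.v (_root_.pullback Sum.inl ψ)) + conjVF Sum.inr (C.v (_root_.pullback Sum.inr ψ)) :=
  rfl

/-- The left inclusion into the coproduct. -/
noncomputable def coprodInl : ParaDynHom B (coprodObj B C) where
  f := Sum.inl
  q := Sum.inl
  compat ψ := by
    have : (coprodObj B C).v (pushforward Sum.inl ψ) = conjVF Sum.inl (B.v ψ) := by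
      erw [coprodObj_v, pullback_pushforward_inl, pullback_pushforward_inr,
        map_zero, map_zero, add_zero]
    rw [this]; rfl

/-- The right inclusion into the coproduct. -/
noncomputable def coprodInr : ParaDynHom C (coprodObj B C) where
  f := Sum.inr
  q := Sum.inr
  compat ψ := by
    have : (coprodObj B C).v (pushforward Sum.inr ψ) = conjVF Sum.inr (C.v ψ) := by
      erw [coprodObj_v, pullback_pushforward_inl', pullback_pushforward_inr',
        map_zero, map_zero, zero_add]
    rw [this]; rfl

/-- The universal morphism out of the coproduct. -/
noncomputable def coprodDesc {D : ParaDynSys} (m : ParaDynHom B D) (n : ParaDynHom C D) :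
    ParaDynHom (coprodObj B C) D where
  f := Sum.elim m.f n.f
  q := Sum.elim m.q n.q
  compat ψ := by
    have key : D.v (pushforward (Sum.elim m.q n.q) ψ) =
        conjVF (Sum.elim m.f n.f) ((coprodObj B C).v ψ) := by
      erw [pushforward_elim, map_add, m.compat' (ψ ∘ (Sum.inl : B.P → B.P ⊕ C.P)), n.compat' (ψ ∘ (Sum.inr : C.P → B.P ⊕ C.P)),
        coprodObj_v, map_add, conjVF_conjVF, conjVF_conjVF,
        Sum.elim_comp_inl m.f n.f, Sum.elim_comp_inr m.f n.f]
      rfl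
    erw [key]; rfl

end Coproduct

noncomputable instance : HasBinaryCoproducts ParaDynSys := by
  have : ∀ {X Y : ParaDynSys}, HasColimit (pair X Y) := by
    intro X Y
    refine HasColimit.mk ⟨BinaryCofan.mk (P := coprodObj X Y)
      (coprodInl X Y : X ⟶ coprodObj X Y) (coprodInr X Y : Y ⟶ coprodObj X Y), ?_⟩
    refine BinaryCofan.isColimitMk
      (fun s => (coprodDesc X Y s.inl s.inr : coprodObj X Y ⟶ s.pt))
      (fun s => ParaDynHom.ext rfl rfl) (fun s => ParaDynHom.ext rfl rfl) ?_
    intro s m h1 h2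
    refine ParaDynHom.ext (funext fun x => ?_) (funext fun x => ?_)
    · cases x with
      | inl b => exact congrFun (congrArg ParaDynHom.f h1) b
      | inr c => exact congrFun (congrArg ParaDynHom.f h2) c
    · cases x with
      | inl b => exact congrFun (congrArg ParaDynHom.q h1) b
      | inr c => exact congrFun (congrArg ParaDynHom.q h2) c
  exact hasBinaryCoproducts_of_hasColimit_pair _

/-! ### Coequalizers -/

section Coequalizer

variable {A B : ParaDynSys} (F G : ParaDynHom A B)

/-- The relation on state spaces induced by two parallel morphisms. -/
def coeqRelS : B.S → B.S → Prop := fun x y => ∃ a, F.f a = x ∧ G.f a = y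

/-- The relation on parameter spaces induced by two parallel morphisms. -/
def coeqRelP : B.P → B.P → Prop := fun x y => ∃ a, F.q a = x ∧ G.q a = y

noncomputable instance : Fintype (Quot (coeqRelS F G)) :=
  Fintype.ofSurjective (Quot.mk _) fun x => Quot.exists_rep x

noncomputable instance : Fintype (Quot (coeqRelP F G)) :=
  Fintype.ofSurjective (Quot.mk _) fun x => Quot.exists_rep x

lemma coeqSurjP : Function.Surjective (Quot.mk (coeqRelP F G)) := fun x => Quot.exists_rep x

/-- The coequalizer object. -/
noncomputable def coeqObj : ParaDynSys where
  S := Quot (coeqRelS F G)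
  P := Quot (coeqRelP F G)
  v := (conjVF (Quot.mk (coeqRelS F G))) ∘ₗ B.v ∘ₗ sectLM (coeqSurjP F G)

lemma coeq_mk_comp : Quot.mk (coeqRelS F G) ∘ F.f = Quot.mk (coeqRelS F G) ∘ G.f :=
  funext fun a => Quot.sound ⟨a, rfl, rfl⟩

/-- The vector field of the coequalizer only depends on the pushforward of parameters. -/
lemma coeq_key (χ χ' : B.P → ℝ)
    (e : pushforward (Quot.mk (coeqRelP F G)) χ = pushforward (Quot.mk (coeqRelP F G)) χ') :
    conjVF (Quot.mk (coeqRelS F G)) (B.v χ) = conjVF (Quot.mk (coeqRelS F G)) (B.v χ') := by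
  refine pushforward_determines (Quot.mk (coeqRelP F G))
    ((conjVF (Quot.mk (coeqRelS F G))) ∘ₗ B.v) ?_ e
  have main : ∀ p p' : B.P, Relation.EqvGen (coeqRelP F G) p p' →
      conjVF (Quot.mk (coeqRelS F G)) (B.v (Pi.single p 1)) =
        conjVF (Quot.mk (coeqRelS F G)) (B.v (Pi.single p' 1)) := by
    intro p p' hgen
    induction hgen with
    | rel x y hxy =>
      obtain ⟨a, hx, hy⟩ := hxy
      subst hx; subst hy
      rw [← pushforward_single F.q a 1, ← pushforward_single G.q a 1,
        F.compat' (Pi.single a 1), G.compat' (Pi.single a 1),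
        conjVF_conjVF, conjVF_conjVF, coeq_mk_comp]
    | refl x => rfl
    | symm x y _ ih => exact ih.symm
    | trans x y z _ _ ih1 ih2 => exact ih1.trans ih2
  intro p p' hpp'
  simp only [LinearMap.coe_comp, Function.comp_apply]
  exact main p p' (Quot.eqvGen_exact hpp')

lemma coeqObj_v (ψ : B.P → ℝ) :
    (coeqObj F G).v (pushforward (Quot.mk (coeqRelP F G)) ψ) =
      conjVF (Quot.mk (coeqRelS F G)) (B.v ψ) := by
  show conjVF (Quot.mk (coeqRelS F G))
      (B.v (sectLM (coeqSurjP F G) (pushforward (Quot.mk (coeqRelP F G)) ψ))) = _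
  exact coeq_key F G _ _ (by rw [pushforward_sectLM])

/-- The projection to the coequalizer. -/
noncomputable def coeqπ : ParaDynHom B (coeqObj F G) where
  f := Quot.mk (coeqRelS F G)
  q := Quot.mk (coeqRelP F G)
  compat ψ := by rw [coeqObj_v]; rfl

/-- The state-space component of the universal morphism out of the coequalizer. -/
noncomputable def coeqDescF {D : ParaDynSys} (m : ParaDynHom B D)
    (hf : m.f ∘ F.f = m.f ∘ G.f) : Quot (coeqRelS F G) → D.S :=
  Quot.lift m.f fun x y h => by
    obtain ⟨a, hx, hy⟩ := h; rw [← hx, ← hy]; exact congrFun hf a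

/-- The parameter-space component of the universal morphism out of the coequalizer. -/
noncomputable def coeqDescQ {D : ParaDynSys} (m : ParaDynHom B D)
    (hq : m.q ∘ F.q = m.q ∘ G.q) : Quot (coeqRelP F G) → D.P :=
  Quot.lift m.q fun x y h => by
    obtain ⟨a, hx, hy⟩ := h; rw [← hx, ← hy]; exact congrFun hq a

/-- The universal morphism out of the coequalizer. -/
noncomputable def coeqDesc {D : ParaDynSys} (m : ParaDynHom B D)
    (hf : m.f ∘ F.f = m.f ∘ G.f) (hq : m.q ∘ F.q = m.q ∘ G.q) :
    ParaDynHom (coeqObj F G) D where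
  f := coeqDescF F G m hf
  q := coeqDescQ F G m hq
  compat ψ := by
    obtain ⟨χ, rfl⟩ : ∃ χ, pushforward (Quot.mk (coeqRelP F G)) χ = ψ :=
      ⟨sectLM (coeqSurjP F G) ψ, pushforward_sectLM _ _⟩
    have key : D.v (pushforward (coeqDescQ F G m hq)
        (pushforward (Quot.mk (coeqRelP F G)) χ)) =
        conjVF (coeqDescF F G m hf)
          ((coeqObj F G).v (pushforward (Quot.mk (coeqRelP F G)) χ)) := by
      rw [coeqObj_v, conjVF_conjVF]
      have h2 : pushforward (coeqDescQ F G m hq) (pushforward (Quot.mk (coeqRelP F G)) χ)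
          = pushforward m.q χ := by rw [pushforward_comp]; rfl
      have h3 : coeqDescF F G m hf ∘ Quot.mk (coeqRelS F G) = m.f := rfl
      rw [h2, h3]
      exact m.compat' χ
    erw [key]
    rfl

end Coequalizer

noncomputable instance : HasCoequalizers ParaDynSys := by
  have : ∀ {X Y : ParaDynSys} {f g : X ⟶ Y}, HasColimit (parallelPair f g) := by
    intro X Y f g
    refine HasColimit.mk ⟨Cofork.ofπ (coeqπ f g : Y ⟶ coeqObj f g)
      (ParaDynHom.ext (funext fun a => Quot.sound ⟨a, rfl, rfl⟩)
        (funext fun a => Quot.sound ⟨a, rfl, rfl⟩)), ?_⟩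
    refine Cofork.IsColimit.mk _ (fun s => ?_) (fun s => ?_) (fun s m w => ?_)
    · exact (coeqDesc f g s.π
        (congrArg ParaDynHom.f s.condition) (congrArg ParaDynHom.q s.condition)
        : coeqObj f g ⟶ s.pt)
    · exact ParaDynHom.ext rfl rfl
    · refine ParaDynHom.ext (funext fun x => ?_) (funext fun x => ?_)
      · induction x using Quot.ind with
        | _ b => exact congrFun (congrArg ParaDynHom.f w) b
      · induction x using Quot.ind with
        | _ b => exact congrFun (congrArg ParaDynHom.q w) b
  exact hasCoequalizers_of_hasColimit_parallelPair _

/-- The category of linearly parametrized dynamical systems has all finite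
colimits. -/
theorem ParaDynam_hasFiniteColimits : Limits.HasFiniteColimits ParaDynSys := by
  haveI : Limits.HasInitial ParaDynSys := Limits.hasInitial_of_unique initObj
  haveI : Limits.HasFiniteCoproducts ParaDynSys :=
    hasFiniteCoproducts_of_has_binary_and_initial
  exact Limits.hasFiniteColimits_of_hasCoequalizers_and_finite_coproducts
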